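/- For three distinct processes P, Q, R, the MSC of the word v = snd(P,Q,m1) · rcv(P,Q,m1) · snd(Q,R,m2) · rcv(Q,R,m2) · snd(R,P,m3) · rcv(R,P,m3), where each send happens-before the next via the receiving process, with the additional constraint that P's send precedes P's receive, Q's receive precedes Q's send, and R's receive precedes R's send, and the cyclic dependency snd(P,Q,m1) ≤ rcv(R,P,m3) through all three processes, is half-duplex and 1-bounded but not 1-synchronisable and not 2-synchronisable; it is 3-synchronisable. -/

import Mathlib

/-- Events: `snd P Q m` is process `P` sending message `m` to `Q`;
    `rcv P Q m` is process `Q` receiving message `m` from `P`. -/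
inductive Ev where
  | snd : ℕ → ℕ → ℕ → Ev
  | rcv : ℕ → ℕ → ℕ → Ev
deriving DecidableEq

/-- Message values of send events on channel (P,Q) in w. -/
def sends (w : List Ev) (P Q : ℕ) : List ℕ :=
  w.filterMap fun e => match e with
    | .snd p q m => if p = P ∧ q = Q then some m else none
    | _ => none

/-- Message values of receive events on channel (P,Q) in w. -/
def recvs (w : List Ev) (P Q : ℕ) : List ℕ :=
  w.filterMap fun e => match e with
    | .rcv p q m => if p = P ∧ q = Q then some m else none
    | _ => none

def channelCompliant (w : List Ev) : Prop :=
  ∀ u, u <+: w → ∀ P Q, recvs u P Q <+: sends u P Q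

def complete (w : List Ev) : Prop :=
  ∀ P Q, sends w P Q = recvs w P Q

def bounded (B : ℕ) (w : List Ev) : Prop :=
  ∀ u, u <+: w → ∀ P Q, (sends u P Q).length ≤ (recvs u P Q).length + B

def halfDuplex (w : List Ev) : Prop :=
  ∀ u, u <+: w → ∀ P Q,
    sends u P Q = recvs u P Q ∨ sends u Q P = recvs u Q P

/-- Send at position i on channel (P,Q) is matched by receive at position j. -/
def Matches (w : List Ev) (P Q i j : ℕ) : Prop :=
  i < j ∧ j < w.length ∧
  (∃ m, w[i]? = some (.snd P Q m) ∧ w[j]? = some (.rcv P Q m)) ∧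
  sends (w.take (i+1)) P Q = recvs (w.take (j+1)) P Q

def IsSendAt (w : List Ev) (P Q i : ℕ) : Prop := ∃ m, w[i]? = some (Ev.snd P Q m)
def IsRcvAt (w : List Ev) (P Q i : ℕ) : Prop := ∃ m, w[i]? = some (Ev.rcv P Q m)
def MatchedAt (w : List Ev) (P Q i : ℕ) : Prop := ∃ j, Matches w P Q i j

/-- The process performing the event. -/
def actor : Ev → ℕ
  | .snd p _ _ => p
  | .rcv _ q _ => q

/-- Projection of a word onto the events of process X. -/
def proj (w : List Ev) (X : ℕ) : List Ev := w.filter (fun e => actor e == X)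

/-- Two words induce the same MSC (same per-process orders; with FIFO matching,
    this determines the matching). -/
def sameMSC (w v : List Ev) : Prop := ∀ X, proj w X = proj v X

/-- Existentially B-bounded: some linearisation of msc(w) is B-bounded. -/
def existBounded (B : ℕ) (w : List Ev) : Prop :=
  ∃ v, channelCompliant v ∧ sameMSC w v ∧ bounded B v

def isSnd : Ev → Prop
  | .snd _ _ _ => True
  | _ => False

def isRcv : Ev → Prop
  | .rcv _ _ _ => True
  | _ => False

/-- Positions i and j lie in the same block of the block decomposition. -/
def SameBlock (blocks : List (List Ev)) (i j : ℕ) : Prop :=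
  ∃ t, ((blocks.take t).flatten).length ≤ i ∧ j < ((blocks.take (t+1)).flatten).length

/-- w is k-synchronisable: some linearisation of msc(w) splits into blocks of
    at most k sends followed by at most k receives, with matched pairs co-located. -/
def kSynchronisable (k : ℕ) (w : List Ev) : Prop :=
  ∃ blocks : List (List Ev),
    channelCompliant blocks.flatten ∧ sameMSC w blocks.flatten ∧
    (∀ b ∈ blocks, ∃ s r, b = s ++ r ∧ s.length ≤ k ∧ r.length ≤ k ∧
      (∀ e ∈ s, isSnd e) ∧ (∀ e ∈ r, isRcv e)) ∧
    (∀ P Q i j, Matches blocks.flatten P Q i j → SameBlock blocks i j)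

/-- One step of the indistinguishability relation ∼. -/
inductive Sim1 : List Ev → List Ev → Prop
  | ss (u v : List Ev) (P Q R S m m' : ℕ) (h : P ≠ R) :
      Sim1 (u ++ Ev.snd P Q m :: Ev.snd R S m' :: v)
           (u ++ Ev.snd R S m' :: Ev.snd P Q m :: v)
  | rr (u v : List Ev) (P Q R S m m' : ℕ) (h : Q ≠ S) :
      Sim1 (u ++ Ev.rcv P Q m :: Ev.rcv R S m' :: v)
           (u ++ Ev.rcv R S m' :: Ev.rcv P Q m :: v)
  | sr (u v : List Ev) (P Q R S m m' : ℕ) (h1 : P ≠ S) (h2 : P ≠ R ∨ Q ≠ S) :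
      Sim1 (u ++ Ev.snd P Q m :: Ev.rcv R S m' :: v)
           (u ++ Ev.rcv R S m' :: Ev.snd P Q m :: v)
  | srSame (u v : List Ev) (P Q m m' : ℕ)
      (h : (recvs u P Q).length < (sends u P Q).length) :
      Sim1 (u ++ Ev.snd P Q m :: Ev.rcv P Q m' :: v)
           (u ++ Ev.rcv P Q m' :: Ev.snd P Q m :: v)

/-- The indistinguishability relation ∼ (finitely many swaps). -/
def Sim : List Ev → List Ev → Prop := Relation.ReflTransGen Sim1

/-!
Each process of this MSC sends before it receives, so in every linearisation `m2` is sent before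
`m1` is received, `m3` before `m2`, and `m1` before `m3`. When every matched send/receive pair must
lie inside one block, the block of `m2` therefore cannot come after the block of `m1`, nor that of
`m3` after that of `m2`, nor that of `m1` after that of `m3`: all six events share a single block,
which holds at most `2k < 6` events when `k ≤ 2`. For `k = 3` the word itself, all sends followed by
all receives, is a single block. Half-duplexity and 1-boundedness hold because no channel is used
in both directions and each channel carries a single message.
-/

open List

theorem filterMap_eq_nil_of_subset {α β : Type*} {f : α → Option β} {l w : List α}
    (hl : l ⊆ w) (hw : w.filterMap f = []) : l.filterMap f = [] :=
  filterMap_eq_nil_iff.2 fun a ha => filterMap_eq_nil_iff.1 hw a (hl ha)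

theorem mem_drop_take_of_getElem? {α : Type*} {l : List α} {m n p : ℕ} {a : α}
    (hm : m ≤ p) (hn : p < n) (hp : l[p]? = some a) : a ∈ (l.take n).drop m := by
  refine mem_of_getElem? (i := p - m) ?_
  rw [getElem?_drop, getElem?_take, Nat.add_sub_cancel' hm, if_pos hn, hp]

theorem lt_of_pair_sublist_of_nodup {α : Type*} {w : List α} {a b : α} {i j : ℕ} (hw : w.Nodup)
    (hab : [a, b] <+ w) (hi : w[i]? = some a) (hj : w[j]? = some b) : i < j := by
  obtain ⟨f, hf⟩ := sublist_iff_exists_orderEmbedding_getElem?_eq.1 hab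
  have hi' : i = f 0 := (getElem?_inj (List.getElem?_eq_some_iff.1 hi).1 hw).1 (hi.trans (hf 0))
  have hj' : j = f 1 := (getElem?_inj (List.getElem?_eq_some_iff.1 hj).1 hw).1 (hj.trans (hf 1))
  rw [hi', hj']
  exact f.strictMono zero_lt_one

@[simp]
theorem sends_append (u v : List Ev) (P Q : ℕ) :
    sends (u ++ v) P Q = sends u P Q ++ sends v P Q :=
  filterMap_append

@[simp]
theorem recvs_append (u v : List Ev) (P Q : ℕ) :
    recvs (u ++ v) P Q = recvs u P Q ++ recvs v P Q :=
  filterMap_append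

@[simp]
theorem sends_snd_cons (P Q m : ℕ) (l : List Ev) :
    sends (Ev.snd P Q m :: l) P Q = m :: sends l P Q := by
  simp [sends]

@[simp]
theorem recvs_rcv_cons (P Q m : ℕ) (l : List Ev) :
    recvs (Ev.rcv P Q m :: l) P Q = m :: recvs l P Q := by
  simp [recvs]

theorem sends_eq_nil_of_forall_isRcv {w : List Ev} (hw : ∀ e ∈ w, isRcv e) (P Q : ℕ) :
    sends w P Q = [] :=
  filterMap_eq_nil_iff.2 fun e he => by
    cases e with
    | snd => exact (hw _ he).elim
    | rcv => rfl

theorem recvs_eq_nil_of_forall_isSnd {w : List Ev} (hw : ∀ e ∈ w, isSnd e) (P Q : ℕ) :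
    recvs w P Q = [] :=
  filterMap_eq_nil_iff.2 fun e he => by
    cases e with
    | snd => rfl
    | rcv => exact (hw _ he).elim

theorem snd_mem_of_mem_sends {w : List Ev} {P Q m : ℕ} (h : m ∈ sends w P Q) :
    Ev.snd P Q m ∈ w := by
  obtain ⟨e, he, hm⟩ := mem_filterMap.1 h
  rcases e with ⟨p, q, m'⟩ | ⟨p, q, m'⟩
  · simp only [Option.ite_none_right_eq_some, Option.some.injEq] at hm
    obtain ⟨⟨rfl, rfl⟩, rfl⟩ := hm
    exact he
  · cases hm

theorem rcv_mem_of_mem_recvs {w : List Ev} {P Q m : ℕ} (h : m ∈ recvs w P Q) :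
    Ev.rcv P Q m ∈ w := by
  obtain ⟨e, he, hm⟩ := mem_filterMap.1 h
  rcases e with ⟨p, q, m'⟩ | ⟨p, q, m'⟩
  · cases hm
  · simp only [Option.ite_none_right_eq_some, Option.some.injEq] at hm
    obtain ⟨⟨rfl, rfl⟩, rfl⟩ := hm
    exact he

theorem sends_eq_singleton_of_perm {u w : List Ev} {P Q m : ℕ} (h : u ~ w)
    (hu : sends u P Q = [m]) : sends w P Q = [m] :=
  perm_singleton.1 (hu ▸ (h.filterMap _).symm)

theorem recvs_eq_singleton_of_perm {u w : List Ev} {P Q m : ℕ} (h : u ~ w)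
    (hu : recvs u P Q = [m]) : recvs w P Q = [m] :=
  perm_singleton.1 (hu ▸ (h.filterMap _).symm)

theorem perm_of_sameMSC {w v : List Ev} (h : sameMSC w v) : w ~ v := by
  refine perm_iff_count.2 fun e => ?_
  have hself : (actor e == actor e) = true := beq_self_eq_true _
  rw [← count_filter (p := (actor · == actor e)) (l := w) hself,
    ← count_filter (p := (actor · == actor e)) (l := v) hself]
  exact congrArg (count e) (h (actor e))

theorem lt_of_proj_eq_pair {u w : List Ev} {X i j : ℕ} {a b : Ev} (hsm : sameMSC u w)
    (hw : w.Nodup) (hX : proj u X = [a, b]) (hi : w[i]? = some a) (hj : w[j]? = some b) :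
    i < j :=
  lt_of_pair_sublist_of_nodup hw (hX ▸ hsm X ▸ filter_sublist) hi hj

theorem channelCompliant_append {s r : List Ev} (hs : ∀ e ∈ s, isSnd e)
    (hr : ∀ e ∈ r, isRcv e) (hsr : ∀ P Q, recvs r P Q <+: sends s P Q) :
    channelCompliant (s ++ r) := by
  intro l hl P Q
  obtain ⟨n, rfl⟩ : ∃ n, l = (s ++ r).take n := ⟨_, prefix_iff_eq_take.1 hl⟩
  rw [take_append, sends_append, recvs_append,
    recvs_eq_nil_of_forall_isSnd (fun e he => hs e (mem_of_mem_take he)), nil_append]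
  by_cases hn : n ≤ s.length
  · rw [Nat.sub_eq_zero_of_le hn, take_zero]
    exact nil_prefix
  · rw [take_of_length_le (l := s) (by omega),
      sends_eq_nil_of_forall_isRcv (fun e he => hr e (mem_of_mem_take he)), append_nil]
    exact ((take_prefix _ r).filterMap _).trans (hsr P Q)

theorem bounded_of_length_sends_le {B : ℕ} {w : List Ev}
    (hw : ∀ P Q, (sends w P Q).length ≤ B) : bounded B w := fun _ hl P Q =>
  ((hl.sublist.filterMap _).length_le.trans (hw P Q)).trans (Nat.le_add_left _ _)

theorem halfDuplex_of_subset {v w : List Ev} (hv : v ⊆ w) (hc : complete w)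
    (hw : ∀ P Q, sends w P Q = [] ∨ sends w Q P = []) : halfDuplex v := by
  intro l hl P Q
  have hlw : l ⊆ w := fun e he => hv (hl.subset he)
  rcases hw P Q with h | h
  · exact .inl <| (filterMap_eq_nil_of_subset hlw h).trans
      (filterMap_eq_nil_of_subset hlw ((hc P Q).symm.trans h)).symm
  · exact .inr <| (filterMap_eq_nil_of_subset hlw h).trans
      (filterMap_eq_nil_of_subset hlw ((hc Q P).symm.trans h)).symm

theorem exists_matches_of_sends_eq_singleton {w : List Ev} {P Q m : ℕ}
    (hcc : channelCompliant w) (hs : sends w P Q = [m]) (hr : recvs w P Q = [m]) :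
    ∃ i j, Matches w P Q i j ∧
      w[i]? = some (Ev.snd P Q m) ∧ w[j]? = some (Ev.rcv P Q m) := by
  obtain ⟨a, b, hab⟩ := append_of_mem (snd_mem_of_mem_sends (hs ▸ mem_singleton_self m))
  obtain ⟨c, d, hcd⟩ := append_of_mem (rcv_mem_of_mem_recvs (hr ▸ mem_singleton_self m))
  rw [hab, sends_append, sends_snd_cons] at hs
  rw [hcd, recvs_append, recvs_rcv_cons] at hr
  obtain ⟨hsa, -⟩ | ⟨-, ⟨⟩⟩ := append_eq_singleton_iff.1 hs
  obtain ⟨hrc, -⟩ | ⟨-, ⟨⟩⟩ := append_eq_singleton_iff.1 hr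
  have hi : w[a.length]? = some (Ev.snd P Q m) := by simp [hab]
  have hj : w[c.length]? = some (Ev.rcv P Q m) := by simp [hcd]
  have hti : w.take (a.length + 1) = a ++ [Ev.snd P Q m] := by
    rw [hab, take_length_add_append]; rfl
  have htj : w.take (c.length + 1) = c ++ [Ev.rcv P Q m] := by
    rw [hcd, take_length_add_append]; rfl
  have hlt : a.length < c.length := by
    refine lt_of_le_of_ne (not_lt.1 fun hca => ?_) fun h => by simp [h, hj] at hi
    have hpre : w.take (c.length + 1) <+: a := by
      simpa [hab] using take_prefix_take_left (l := w) (Nat.succ_le_of_lt hca)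
    have hcc' := hcc _ (take_prefix (c.length + 1) w) P Q
    have hnil : sends (w.take (c.length + 1)) P Q = [] :=
      prefix_nil.1 (hsa ▸ (hpre.filterMap _ : sends _ P Q <+: sends a P Q))
    rw [hnil, htj, recvs_append, hrc] at hcc'
    simp at hcc'
  refine ⟨a.length, c.length, ⟨hlt, (List.getElem?_eq_some_iff.1 hj).1, ⟨m, hi, hj⟩, ?_⟩, hi, hj⟩
  rw [hti, htj, sends_append, recvs_append, hsa, hrc]
  rfl

section Blocks

variable {α : Type*} (blocks : List (List α))

def blockStart (t : ℕ) : ℕ := ((blocks.take t).flatten).length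

theorem blockStart_mono : Monotone (blockStart blocks) := fun _ _ h =>
  (take_prefix_take_left h).flatten.length_le

theorem blockStart_succ_le {n : ℕ} (h : ∀ b ∈ blocks, b.length ≤ n) (t : ℕ) :
    blockStart blocks (t + 1) ≤ blockStart blocks t + n := by
  simp only [blockStart, take_add_one, flatten_append, length_append]
  cases hb : blocks[t]? with
  | none => simp
  | some b => simpa using h b (mem_of_getElem? hb)

variable {blocks}

theorem le_of_blockStart_le_of_lt {t t' i j : ℕ} (hi : blockStart blocks t ≤ i)
    (hj : j < blockStart blocks (t' + 1)) (hij : i ≤ j) : t ≤ t' := by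
  by_contra! h
  have : blockStart blocks (t' + 1) ≤ blockStart blocks t := blockStart_mono blocks h
  omega

theorem length_le_of_forall_mem_block {n t : ℕ}
    (hn : ∀ b ∈ blocks, b.length ≤ n) {l : List α} (hl : l.Nodup)
    (h : ∀ a ∈ l, ∃ p, blockStart blocks t ≤ p ∧ p < blockStart blocks (t + 1) ∧
      blocks.flatten[p]? = some a) :
    l.length ≤ n := by
  have hsub : l ⊆ (blocks.flatten.take (blockStart blocks (t + 1))).drop (blockStart blocks t) :=
    fun a ha =>
      let ⟨_, hm, hp, ha⟩ := h a ha
      mem_drop_take_of_getElem? hm hp ha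
  have hlen := (hl.subperm hsub).length_le
  have := blockStart_succ_le blocks hn t
  simp only [length_drop, length_take] at hlen
  omega

end Blocks

theorem sameBlock_iff {blocks : List (List Ev)} {i j : ℕ} :
    SameBlock blocks i j ↔ ∃ t, blockStart blocks t ≤ i ∧ j < blockStart blocks (t + 1) :=
  Iff.rfl

theorem kSynchronisable_append {k : ℕ} {s r : List Ev} (hsk : s.length ≤ k)
    (hrk : r.length ≤ k) (hs : ∀ e ∈ s, isSnd e) (hr : ∀ e ∈ r, isRcv e)
    (hsr : ∀ P Q, recvs r P Q <+: sends s P Q) :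
    kSynchronisable k (s ++ r) := by
  refine ⟨[s ++ r], ?_, fun _ => ?_, ?_, fun P Q i j hij => ⟨0, ?_⟩⟩
  · simpa using channelCompliant_append hs hr hsr
  · simp
  · simpa using ⟨s, r, rfl, hsk, hrk, hs, hr⟩
  · simpa using hij.2.1

def cyclicWord (P Q R m1 m2 m3 : ℕ) : List Ev :=
  [Ev.snd P Q m1, Ev.snd Q R m2, Ev.snd R P m3, Ev.rcv P Q m1, Ev.rcv Q R m2, Ev.rcv R P m3]

section CyclicWord

variable {P Q R m1 m2 m3 : ℕ}

theorem complete_cyclicWord : complete (cyclicWord P Q R m1 m2 m3) := fun _ _ => rfl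

theorem cyclicWord_nodup (hPR : P ≠ R) :
    (cyclicWord P Q R m1 m2 m3).Nodup := by
  simp only [cyclicWord, nodup_cons, mem_cons, Ev.snd.injEq, Ev.rcv.injEq, hPR, false_and,
    reduceCtorEq, not_mem_nil, or_self, or_false, not_and, not_false_eq_true, nodup_nil, and_self,
    and_true, true_and]
  omega

theorem sends_cyclicWord (hPQ : P ≠ Q) (hQR : Q ≠ R) (hPR : P ≠ R) :
    sends (cyclicWord P Q R m1 m2 m3) P Q = [m1] ∧ sends (cyclicWord P Q R m1 m2 m3) Q R = [m2] ∧
      sends (cyclicWord P Q R m1 m2 m3) R P = [m3] := by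
  simp [cyclicWord, sends, hPQ, hQR, hPR, hPQ.symm, hQR.symm, hPR.symm]

theorem length_sends_cyclicWord_le_one (hPR : P ≠ R) (X Y : ℕ) :
    (sends (cyclicWord P Q R m1 m2 m3) X Y).length ≤ 1 := by
  simp only [cyclicWord, sends, filterMap_cons, filterMap_nil]
  split_ifs <;> simp_all

theorem sends_cyclicWord_eq_nil_or (hPQ : P ≠ Q) (hQR : Q ≠ R) (hPR : P ≠ R) (X Y : ℕ) :
    sends (cyclicWord P Q R m1 m2 m3) X Y = [] ∨ sends (cyclicWord P Q R m1 m2 m3) Y X = [] := by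
  simp only [sends, cyclicWord, filterMap_eq_nil_iff, mem_cons, not_mem_nil, or_false,
    forall_eq_or_imp, ite_eq_right_iff, reduceCtorEq, imp_false, not_and, forall_eq, and_self,
    and_true]
  omega

theorem halfDuplex_of_sameMSC_cyclicWord (hPQ : P ≠ Q) (hQR : Q ≠ R) (hPR : P ≠ R)
    {v : List Ev} (hv : sameMSC (cyclicWord P Q R m1 m2 m3) v) : halfDuplex v :=
  halfDuplex_of_subset (perm_of_sameMSC hv).symm.subset complete_cyclicWord
    (sends_cyclicWord_eq_nil_or hPQ hQR hPR)

theorem proj_cyclicWord (hPQ : P ≠ Q) (hQR : Q ≠ R) (hPR : P ≠ R) :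
    proj (cyclicWord P Q R m1 m2 m3) P = [Ev.snd P Q m1, Ev.rcv R P m3] ∧
      proj (cyclicWord P Q R m1 m2 m3) Q = [Ev.snd Q R m2, Ev.rcv P Q m1] ∧
      proj (cyclicWord P Q R m1 m2 m3) R = [Ev.snd R P m3, Ev.rcv Q R m2] := by
  simp [cyclicWord, proj, actor, hPQ, hQR, hPR, hPQ.symm, hQR.symm, hPR.symm]

end CyclicWord

theorem cyclicWord_not_kSynchronisable {P Q R m1 m2 m3 k : ℕ} (hPQ : P ≠ Q) (hQR : Q ≠ R)
    (hPR : P ≠ R) (hk : k < 3) : ¬ kSynchronisable k (cyclicWord P Q R m1 m2 m3) := by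
  rintro ⟨blocks, hcc, hsm, hshape, hmatch⟩
  set w := blocks.flatten
  have hperm := perm_of_sameMSC hsm
  have hw : w.Nodup := hperm.nodup_iff.1 (cyclicWord_nodup hPR)
  have hchannel : ∀ {X Y m}, sends (cyclicWord P Q R m1 m2 m3) X Y = [m] →
      ∃ i j, Matches w X Y i j ∧ w[i]? = some (Ev.snd X Y m) ∧ w[j]? = some (Ev.rcv X Y m) :=
    fun h => exists_matches_of_sends_eq_singleton hcc (sends_eq_singleton_of_perm hperm h)
      (recvs_eq_singleton_of_perm hperm ((complete_cyclicWord _ _).symm.trans h))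
  obtain ⟨hc1, hc2, hc3⟩ := sends_cyclicWord (m1 := m1) (m2 := m2) (m3 := m3) hPQ hQR hPR
  obtain ⟨i1, j1, M1, hi1, hj1⟩ := hchannel hc1
  obtain ⟨i2, j2, M2, hi2, hj2⟩ := hchannel hc2
  obtain ⟨i3, j3, M3, hi3, hj3⟩ := hchannel hc3
  obtain ⟨hP, hQ, hR⟩ := proj_cyclicWord (m1 := m1) (m2 := m2) (m3 := m3) hPQ hQR hPR
  have o13 : i1 < j3 := lt_of_proj_eq_pair hsm hw hP hi1 hj3
  have o21 : i2 < j1 := lt_of_proj_eq_pair hsm hw hQ hi2 hj1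
  have o32 : i3 < j2 := lt_of_proj_eq_pair hsm hw hR hi3 hj2
  obtain ⟨t1, hs1, ht1⟩ := sameBlock_iff.1 (hmatch _ _ _ _ M1)
  obtain ⟨t2, hs2, ht2⟩ := sameBlock_iff.1 (hmatch _ _ _ _ M2)
  obtain ⟨t3, hs3, ht3⟩ := sameBlock_iff.1 (hmatch _ _ _ _ M3)
  have h21 : t2 ≤ t1 := le_of_blockStart_le_of_lt hs2 ht1 o21.le
  have h32 : t3 ≤ t2 := le_of_blockStart_le_of_lt hs3 ht2 o32.le
  have h13 : t1 ≤ t3 := le_of_blockStart_le_of_lt hs1 ht3 o13.le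
  rw [show t2 = t1 by omega] at hs2 ht2
  rw [show t3 = t1 by omega] at hs3 ht3
  have hblock : ∀ b ∈ blocks, b.length ≤ 2 * k := fun b hb => by
    obtain ⟨s, r, rfl, hs, hr, -, -⟩ := hshape b hb
    simp only [length_append]
    omega
  have hsix : (cyclicWord P Q R m1 m2 m3).length ≤ 2 * k := by
    refine length_le_of_forall_mem_block (t := t1) hblock (cyclicWord_nodup hPR) ?_
    simp only [cyclicWord, mem_cons, not_mem_nil, or_false, forall_eq_or_imp, forall_eq]
    -- the missing bounds come from the cyclic orders, e.g. `i1 < j3 < blockStart blocks (t1 + 1)`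
    exact ⟨⟨i1, hs1, by omega, hi1⟩, ⟨i2, hs2, by omega, hi2⟩, ⟨i3, hs3, by omega, hi3⟩,
      ⟨j1, by omega, ht1, hj1⟩, ⟨j2, by omega, ht2, hj2⟩, ⟨j3, by omega, ht3, hj3⟩⟩
  simp only [cyclicWord, length_cons, length_nil] at hsix
  omega

/-- the cyclic 3-process MSC (P→Q, Q→R, R→P, each process sending
    before receiving) is half-duplex and existentially 1-bounded, not 1- or
    2-synchronisable, but 3-synchronisable. -/
theorem cyclic_three_process_example (P Q R m1 m2 m3 : ℕ)
    (hPQ : P ≠ Q) (hQR : Q ≠ R) (hPR : P ≠ R) :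
    let u : List Ev := [Ev.snd P Q m1, Ev.snd Q R m2, Ev.snd R P m3,
      Ev.rcv P Q m1, Ev.rcv Q R m2, Ev.rcv R P m3]
    (∀ v, channelCompliant v → sameMSC u v → halfDuplex v) ∧
    existBounded 1 u ∧
    ¬ kSynchronisable 1 u ∧ ¬ kSynchronisable 2 u ∧ kSynchronisable 3 u := by
  intro u
  have hsnd : ∀ e ∈ [Ev.snd P Q m1, Ev.snd Q R m2, Ev.snd R P m3], isSnd e := by
    simp [isSnd]
  have hrcv : ∀ e ∈ [Ev.rcv P Q m1, Ev.rcv Q R m2, Ev.rcv R P m3], isRcv e := by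
    simp [isRcv]
  have hround : ∀ X Y, recvs [Ev.rcv P Q m1, Ev.rcv Q R m2, Ev.rcv R P m3] X Y <+:
      sends [Ev.snd P Q m1, Ev.snd Q R m2, Ev.snd R P m3] X Y := fun _ _ => prefix_refl _
  exact ⟨fun _ _ hv => halfDuplex_of_sameMSC_cyclicWord hPQ hQR hPR hv,
    ⟨u, channelCompliant_append hsnd hrcv hround, fun _ => rfl,
      bounded_of_length_sends_le (length_sends_cyclicWord_le_one hPR)⟩,
    cyclicWord_not_kSynchronisable hPQ hQR hPR (by norm_num),
    cyclicWord_not_kSynchronisable hPQ hQR hPR (by norm_num),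
    kSynchronisable_append (by simp) (by simp) hsnd hrcv hround⟩
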